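/- arXiv:2308.01459 — 2 statements merged into one kernel-verified Lean document; each statement's English description precedes it below -/
import Mathlib

section
/- Let M' = ⟨(1,0), (0,2)⟩ and M = M' ∪ (ℤ × {n ∈ ℤ : n ≥ 3}) as an additive submonoid of ℤ². Then M is a reduced monoid with set of atoms exactly {(1,0), (0,2)}, and M is quasi-atomic but not almost atomic. -/
/-- An element of ℤ² invertible within the submonoid M. -/
def IsUnitIn (M : AddSubmonoid (ℤ × ℤ)) (x : ℤ × ℤ) : Prop :=
  x ∈ M ∧ -x ∈ M

/-- An atom of the submonoid M of ℤ². -/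
def IsAtomIn (M : AddSubmonoid (ℤ × ℤ)) (a : ℤ × ℤ) : Prop :=
  a ∈ M ∧ ¬ IsUnitIn M a ∧
    ∀ r s : ℤ × ℤ, r ∈ M → s ∈ M → a = r + s → IsUnitIn M r ∨ IsUnitIn M s

/-- The submonoid generated by the atoms of M. -/
def AtomicElems (M : AddSubmonoid (ℤ × ℤ)) : AddSubmonoid (ℤ × ℤ) :=
  AddSubmonoid.closure {a : ℤ × ℤ | IsAtomIn M a}

/-!
The submonoid `M` sits in the half plane `y ≥ 0` and meets the line `y = 0` only in `ℕ × {0}`,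
so it is reduced. Every nonzero element of `M` stays in `M` after subtracting `(1,0)` or `(0,2)`,
which leaves these two as the only atoms. A point `(x, y)` with `y ≥ 3` becomes a sum of atoms
after adding `(-x, y) ∈ M`; but sums of atoms have even second coordinate, so no sum of atoms
turns `(0,3)` into one.
-/

theorem AddSubmonoid.mem_closure_one_zero_zero_iff {n : ℤ} (hn : 0 < n) (x : ℤ × ℤ) :
    x ∈ AddSubmonoid.closure {((1 : ℤ), (0 : ℤ)), ((0 : ℤ), n)} ↔
      0 ≤ x.1 ∧ 0 ≤ x.2 ∧ n ∣ x.2 := by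
  rw [AddSubmonoid.mem_closure_pair]
  constructor
  · rintro ⟨a, b, rfl⟩
    simpa using mul_nonneg b.cast_nonneg hn.le
  · rintro ⟨hx₁, hx₂, k, hk⟩
    have hk₀ : 0 ≤ k := nonneg_of_mul_nonneg_right (hk ▸ hx₂) hn
    refine ⟨x.1.toNat, k.toNat, Prod.ext ?_ ?_⟩
    · simp [Int.toNat_of_nonneg hx₁]
    · simp [Int.toNat_of_nonneg hk₀, hk, mul_comm]

theorem isUnitIn_zero (M : AddSubmonoid (ℤ × ℤ)) : IsUnitIn M 0 :=
  ⟨zero_mem M, by simp⟩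

theorem isAtomIn_iff_of_isUnitIn_imp_eq_zero {M : AddSubmonoid (ℤ × ℤ)}
    (hred : ∀ x, IsUnitIn M x → x = 0) (a : ℤ × ℤ) :
    IsAtomIn M a ↔ a ∈ M ∧ a ≠ 0 ∧ ∀ r s, r ∈ M → s ∈ M → a = r + s → r = 0 ∨ s = 0 := by
  have hunit : ∀ x, IsUnitIn M x ↔ x = 0 :=
    fun x ↦ ⟨hred x, by rintro rfl; exact isUnitIn_zero M⟩
  simp only [IsAtomIn, hunit, ne_eq]

namespace M12

variable {M : AddSubmonoid (ℤ × ℤ)}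
  (hM : (M : Set (ℤ × ℤ)) =
    (AddSubmonoid.closure {((1 : ℤ), (0 : ℤ)), ((0 : ℤ), (2 : ℤ))} : Set (ℤ × ℤ))
      ∪ {p : ℤ × ℤ | 3 ≤ p.2})
include hM

theorem mem_iff (x : ℤ × ℤ) : x ∈ M ↔ (0 ≤ x.1 ∧ 0 ≤ x.2 ∧ 2 ∣ x.2) ∨ 3 ≤ x.2 := by
  rw [← SetLike.mem_coe, hM, Set.mem_union, SetLike.mem_coe,
    AddSubmonoid.mem_closure_one_zero_zero_iff two_pos, Set.mem_ofPred_eq]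

theorem eq_zero_of_isUnitIn {x : ℤ × ℤ} (hx : IsUnitIn M x) : x = 0 := by
  obtain ⟨hx, hnx⟩ := hx
  rw [mem_iff hM] at hx hnx
  simp only [Prod.fst_neg, Prod.snd_neg] at hnx
  ext <;> simp only [Prod.fst_zero, Prod.snd_zero] <;> omega

theorem sub_one_zero_mem_or_sub_zero_two_mem {a : ℤ × ℤ} (ha : a ∈ M) (ha₀ : a ≠ 0) :
    a - (1, 0) ∈ M ∨ a - (0, 2) ∈ M := by
  rw [Ne, Prod.ext_iff] at ha₀
  simp only [mem_iff hM, Prod.fst_sub, Prod.snd_sub, Prod.fst_zero, Prod.snd_zero] at ha ha₀ ⊢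
  omega

theorem eq_zero_or_eq_zero_of_add_eq {r s : ℤ × ℤ} (hr : r ∈ M) (hs : s ∈ M)
    (hrs : r + s = (1, 0) ∨ r + s = (0, 2)) : r = 0 ∨ s = 0 := by
  rw [mem_iff hM] at hr hs
  simp only [Prod.ext_iff, Prod.fst_add, Prod.snd_add, Prod.fst_zero, Prod.snd_zero] at hrs ⊢
  omega

theorem setOf_isAtomIn : {a | IsAtomIn M a} = {((1 : ℤ), (0 : ℤ)), ((0 : ℤ), (2 : ℤ))} := by
  ext a
  simp only [Set.mem_ofPred_eq, Set.mem_insert_iff, Set.mem_singleton_iff,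
    isAtomIn_iff_of_isUnitIn_imp_eq_zero (fun _ ↦ eq_zero_of_isUnitIn hM)]
  constructor
  · rintro ⟨ha, ha₀, hsplit⟩
    have eq_of_sub_mem : ∀ g ∈ M, g ≠ 0 → a - g ∈ M → a = g := fun g hg hg₀ hag ↦
      sub_eq_zero.mp ((hsplit g (a - g) hg hag (by abel)).resolve_left hg₀)
    rcases sub_one_zero_mem_or_sub_zero_two_mem hM ha ha₀ with h | h
    · exact .inl (eq_of_sub_mem _ ((mem_iff hM _).2 (by norm_num)) (by simp) h)
    · exact .inr (eq_of_sub_mem _ ((mem_iff hM _).2 (by norm_num)) (by simp) h)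
  · rintro ha
    refine ⟨(mem_iff hM _).2 ?_, ?_, fun r s hr hs hrs ↦
      eq_zero_or_eq_zero_of_add_eq hM hr hs (hrs ▸ ha)⟩ <;>
    rcases ha with rfl | rfl <;> norm_num

theorem mem_atomicElems_iff (x : ℤ × ℤ) :
    x ∈ AtomicElems M ↔ 0 ≤ x.1 ∧ 0 ≤ x.2 ∧ 2 ∣ x.2 := by
  rw [AtomicElems, setOf_isAtomIn hM, AddSubmonoid.mem_closure_one_zero_zero_iff two_pos]

theorem exists_add_mem_atomicElems {b : ℤ × ℤ} (hb : b ∈ M) :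
    ∃ m ∈ M, b + m ∈ AtomicElems M := by
  rcases (mem_iff hM b).1 hb with hb' | hb'
  · exact ⟨0, zero_mem M, by simpa [mem_atomicElems_iff hM] using hb'⟩
  · refine ⟨(-b.1, b.2), (mem_iff hM _).2 (.inr hb'), (mem_atomicElems_iff hM _).2 ?_⟩
    simp only [Prod.fst_add, Prod.snd_add]
    omega

theorem zero_three_add_notMem_atomicElems {c : ℤ × ℤ} (hc : c ∈ AtomicElems M) :
    ((0 : ℤ), (3 : ℤ)) + c ∉ AtomicElems M := by
  rw [mem_atomicElems_iff hM] at hc ⊢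
  simp only [Prod.fst_add, Prod.snd_add]
  omega

end M12

/-- Let M = ⟨(1,0),(0,2)⟩ ∪ (ℤ × ℤ_{≥3}).  Then M is reduced, its atoms are
exactly (1,0) and (0,2), and M is quasi-atomic but not almost atomic. -/
theorem M12_quasi_atomic_not_almost_atomic (M : AddSubmonoid (ℤ × ℤ))
    (hM : (M : Set (ℤ × ℤ)) =
      (AddSubmonoid.closure {((1 : ℤ), (0 : ℤ)), ((0 : ℤ), (2 : ℤ))} : Set (ℤ × ℤ))
        ∪ {p : ℤ × ℤ | 3 ≤ p.2}) :
    (∀ x ∈ M, IsUnitIn M x → x = 0) ∧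
    ({a : ℤ × ℤ | IsAtomIn M a} = {((1 : ℤ), (0 : ℤ)), ((0 : ℤ), (2 : ℤ))}) ∧
    (∀ b ∈ M, ¬ IsUnitIn M b → ∃ m ∈ M, b + m ∈ AtomicElems M) ∧
    ¬ (∀ b ∈ M, ¬ IsUnitIn M b →
        ∃ c : ℤ × ℤ, c ∈ AtomicElems M ∧ b + c ∈ AtomicElems M) := by
  refine ⟨fun _ _ ↦ M12.eq_zero_of_isUnitIn hM, M12.setOf_isAtomIn hM,
    fun _ hb _ ↦ M12.exists_add_mem_atomicElems hM hb, fun h ↦ ?_⟩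
  have h03 : ((0 : ℤ), (3 : ℤ)) ∈ M := (M12.mem_iff hM _).2 (.inr le_rfl)
  obtain ⟨c, hc, h3c⟩ := h _ h03 fun hu ↦ by simpa using M12.eq_zero_of_isUnitIn hM hu
  exact M12.zero_three_add_notMem_atomicElems hM hc h3c
end

section
/- Every additive submonoid of ℤ × ℕ is a Furstenberg monoid: every non-unit element is divisible in the monoid by some atom. Consequently, every rationally supported submonoid of ℤ² is Furstenberg. -/
/-- An element of ℤ × ℕ invertible within the submonoid M. -/
def IsUnitInZN (M : AddSubmonoid (ℤ × ℕ)) (x : ℤ × ℕ) : Prop :=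
  x ∈ M ∧ ∃ y ∈ M, x + y = 0

/-- An atom of the submonoid M of ℤ × ℕ. -/
def IsAtomInZN (M : AddSubmonoid (ℤ × ℕ)) (a : ℤ × ℕ) : Prop :=
  a ∈ M ∧ ¬ IsUnitInZN M a ∧
    ∀ r s : ℤ × ℕ, r ∈ M → s ∈ M → a = r + s → IsUnitInZN M r ∨ IsUnitInZN M s

/-- M is rationally supported. -/
def RationallySupported (M : AddSubmonoid (ℤ × ℤ)) : Prop :=
  ∃ a b : ℤ, (a ≠ 0 ∨ b ≠ 0) ∧ ∀ x ∈ M, 0 ≤ a * x.1 + b * x.2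

section Core

variable {M : AddSubmonoid (ℤ × ℤ)} {f g : (ℤ × ℤ) →+ ℤ}

lemma zsmul_mem_of_nonneg {n : ℤ} (hn : 0 ≤ n) {x : ℤ × ℤ} (hx : x ∈ M) :
    n • x ∈ M := by
  lift n to ℕ using hn
  rw [natCast_zsmul]
  exact AddSubmonoid.nsmul_mem M hx n

lemma zero_unit : IsUnitIn M 0 := ⟨M.zero_mem, by simpa using M.zero_mem⟩

/-- the group lemma -/
lemma ker_group (hker : ∀ x : ℤ × ℤ, f x = 0 → g x = 0 → x = 0)
    {p q : ℤ × ℤ} (hp : p ∈ M) (hq : q ∈ M)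
    (hfp : f p = 0) (hfq : f q = 0) (hgp : 0 < g p) (hgq : g q < 0)
    {x : ℤ × ℤ} (hx : x ∈ M) (hfx : f x = 0) : -x ∈ M := by
  set gg : ℤ := g p * (-g q) with hgg
  have hggpos : 0 < gg := mul_pos hgp (by linarith)
  set G : ℤ × ℤ := (-g q).toNat • p with hG
  have hGM : G ∈ M := AddSubmonoid.nsmul_mem M hp _
  have htn : ((-g q).toNat : ℤ) = -g q := Int.toNat_of_nonneg (by linarith)
  have hfG : f G = 0 := by
    rw [hG, map_nsmul, hfp, smul_zero]
  have hgG : g G = gg := by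
    rw [hG, map_nsmul, nsmul_eq_mul, htn, hgg]; ring
  have htp : ((g p).toNat : ℤ) = g p := Int.toNat_of_nonneg (by linarith)
  have hnegG : -G ∈ M := by
    have h0 : G + (g p).toNat • q = 0 := by
      apply hker
      · rw [map_add, hfG, map_nsmul, hfq, smul_zero, add_zero]
      · rw [map_add, hgG, map_nsmul, nsmul_eq_mul, htp, hgg]; ring
    have heq : -G = (g p).toNat • q := by
      rw [neg_eq_iff_add_eq_zero]
      exact h0
    rw [heq]
    exact AddSubmonoid.nsmul_mem M hq _
  have hgx : gg • x = g x • G := by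
    have h0 : gg • x - g x • G = 0 := by
      apply hker
      · rw [map_sub, map_zsmul, map_zsmul, hfx, hfG, smul_zero, smul_zero, sub_zero]
      · rw [map_sub, map_zsmul, map_zsmul, hgG, smul_eq_mul, smul_eq_mul]; ring
    exact sub_eq_zero.mp h0
  have key : -x = (gg - 1) • x + (-(g x)) • G := by
    rw [neg_zsmul, ← hgx, sub_zsmul, one_zsmul]
    abel
  rw [key]
  rcases le_or_gt 0 (g x) with h | h
  · have : (-(g x)) • G = (g x) • (-G) := by rw [zsmul_neg, neg_zsmul]
    rw [this]
    exact M.add_mem (zsmul_mem_of_nonneg (by linarith) hx)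
      (zsmul_mem_of_nonneg h hnegG)
  · exact M.add_mem (zsmul_mem_of_nonneg (by linarith) hx)
      (zsmul_mem_of_nonneg (by linarith) hGM)

/-- minimal-divisor atom lemma, in the kernel of f, all g ≥ 0 on divisors -/
lemma ker_atom (hker : ∀ x : ℤ × ℤ, f x = 0 → g x = 0 → x = 0)
    (hM : ∀ x ∈ M, 0 ≤ f x)
    {c : ℤ × ℤ} (hc : c ∈ M) (hfc : f c = 0) (hcu : ¬ IsUnitIn M c)
    (hsign : ∀ d ∈ M, f d = 0 → (∃ t ∈ M, c = d + t) → 0 ≤ g d) :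
    ∃ a t : ℤ × ℤ, IsAtomIn M a ∧ t ∈ M ∧ c = a + t := by
  have hker0 : ∀ d t : ℤ × ℤ, d ∈ M → t ∈ M → c = d + t → f d = 0 ∧ f t = 0 := by
    intro d t hd ht hdt
    have h1 := hM d hd
    have h2 := hM t ht
    have h3 : f d + f t = 0 := by rw [← map_add, ← hdt, hfc]
    constructor <;> linarith
  have hgc : 0 < g c := by
    have h0 : 0 ≤ g c := hsign c hc hfc ⟨0, M.zero_mem, by simp⟩
    rcases h0.lt_or_eq with h | h
    · exact h
    · exfalso
      exact hcu (by rw [hker c hfc h.symm]; exact zero_unit)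
  set S : Set ℕ := {n : ℕ | 0 < n ∧ ∃ d ∈ M, (∃ t ∈ M, c = d + t) ∧ g d = (n : ℤ)}
    with hS
  have hSne : (g c).toNat ∈ S := by
    refine ⟨by omega, c, hc, ⟨0, M.zero_mem, by simp⟩, ?_⟩
    rw [Int.toNat_of_nonneg hgc.le]
  obtain ⟨hnpos, d, hdM, ⟨t, htM, hct⟩, hgd⟩ := Nat.sInf_mem ⟨_, hSne⟩
  set n := sInf S
  have hfd : f d = 0 := (hker0 d t hdM htM hct).1
  have hdnu : ¬ IsUnitIn M d := by
    rintro ⟨-, hnd⟩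
    have hdiv : ∃ t' ∈ M, c = -d + t' :=
      ⟨d + (d + t), M.add_mem hdM (M.add_mem hdM htM), by rw [hct]; abel⟩
    have := hsign (-d) hnd (by rw [map_neg, hfd, neg_zero]) hdiv
    rw [map_neg] at this
    omega
  refine ⟨d, t, ⟨hdM, hdnu, ?_⟩, htM, hct⟩
  intro r s hr hs hdrs
  have hfr : f r = 0 := (hker0 r (s + t) hr (M.add_mem hs htM)
    (by rw [hct, hdrs]; abel)).1
  have hfs : f s = 0 := (hker0 s (r + t) hs (M.add_mem hr htM)
    (by rw [hct, hdrs]; abel)).1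
  have hgr : 0 ≤ g r := hsign r hr hfr ⟨s + t, M.add_mem hs htM, by rw [hct, hdrs]; abel⟩
  have hgs : 0 ≤ g s := hsign s hs hfs ⟨r + t, M.add_mem hr htM, by rw [hct, hdrs]; abel⟩
  have hsum : g r + g s = (n : ℤ) := by rw [← map_add, ← hdrs, hgd]
  rcases hgr.lt_or_eq with hr' | hr'
  · rcases hgs.lt_or_eq with hs' | hs'
    · exfalso
      have h1 : n ≤ (g r).toNat := Nat.sInf_le
        ⟨by omega, r, hr, ⟨s + t, M.add_mem hs htM, by rw [hct, hdrs]; abel⟩,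
          (Int.toNat_of_nonneg hgr).symm⟩
      have h2 : n ≤ (g s).toNat := Nat.sInf_le
        ⟨by omega, s, hs, ⟨r + t, M.add_mem hr htM, by rw [hct, hdrs]; abel⟩,
          (Int.toNat_of_nonneg hgs).symm⟩
      omega
    · right
      rw [hker s hfs hs'.symm]
      exact zero_unit
  · left
    rw [hker r hfr hr'.symm]
    exact zero_unit

/-- kernel case, general sign -/
lemma ker_case (hker : ∀ x : ℤ × ℤ, f x = 0 → g x = 0 → x = 0)
    (hM : ∀ x ∈ M, 0 ≤ f x)
    {c : ℤ × ℤ} (hc : c ∈ M) (hfc : f c = 0) (hcu : ¬ IsUnitIn M c) :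
    ∃ a t : ℤ × ℤ, IsAtomIn M a ∧ t ∈ M ∧ c = a + t := by
  by_cases H : ∃ p ∈ M, f p = 0 ∧ 0 < g p ∧ ∃ q ∈ M, f q = 0 ∧ g q < 0
  · obtain ⟨p, hp, hfp, hgp, q, hq, hfq, hgq⟩ := H
    exact absurd ⟨hc, ker_group hker hp hq hfp hfq hgp hgq hc hfc⟩ hcu
  · push_neg at H
    rcases lt_trichotomy (g c) 0 with h | h | h
    · refine ker_atom (g := -g) (fun x h1 h2 => hker x h1 (by simpa using h2))
        hM hc hfc hcu ?_
      intro d hd hfd _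
      simp only [AddMonoidHom.neg_apply, neg_nonneg]
      by_contra hgd
      push_neg at hgd
      exact absurd (H d hd hfd hgd c hc hfc) (by omega)
    · exact absurd (by rw [hker c hfc h]; exact zero_unit) hcu
    · exact ker_atom hker hM hc hfc hcu
        (fun d hd hfd _ => H c hc hfc h d hd hfd)

/-- main core lemma -/
lemma core_main (hker : ∀ x : ℤ × ℤ, f x = 0 → g x = 0 → x = 0)
    (hM : ∀ x ∈ M, 0 ≤ f x)
    {c : ℤ × ℤ} (hc : c ∈ M) (hcu : ¬ IsUnitIn M c) :
    ∃ a t : ℤ × ℤ, IsAtomIn M a ∧ t ∈ M ∧ c = a + t := by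
  -- helper: pass to a kernel divisor
  have step : ∀ r w : ℤ × ℤ, r ∈ M → w ∈ M → f r = 0 → ¬ IsUnitIn M r →
      c = r + w → ∃ a t : ℤ × ℤ, IsAtomIn M a ∧ t ∈ M ∧ c = a + t := by
    intro r w hr hw hfr hru hcrw
    obtain ⟨a, t', ha, ht', hrt'⟩ := ker_case hker hM hr hfr hru
    exact ⟨a, t' + w, ha, M.add_mem ht' hw, by rw [hcrw, hrt', add_assoc]⟩
  rcases (hM c hc).lt_or_eq with hfc | hfc
  swap
  · exact ker_case hker hM hc hfc.symm hcu
  set S : Set ℕ := {n : ℕ | 0 < n ∧ ∃ d ∈ M, (∃ t ∈ M, c = d + t) ∧ f d = (n : ℤ)}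
    with hS
  have hSne : (f c).toNat ∈ S := by
    refine ⟨by omega, c, hc, ⟨0, M.zero_mem, by simp⟩, ?_⟩
    rw [Int.toNat_of_nonneg hfc.le]
  obtain ⟨hnpos, d, hdM, ⟨t, htM, hct⟩, hfd⟩ := Nat.sInf_mem ⟨_, hSne⟩
  set n := sInf S
  have hdnu : ¬ IsUnitIn M d := by
    rintro ⟨-, hnd⟩
    have := hM _ hnd
    rw [map_neg] at this
    omega
  by_cases hda : IsAtomIn M d
  · exact ⟨d, t, hda, htM, hct⟩
  · unfold IsAtomIn at hda
    push_neg at hda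
    obtain ⟨r, s, hr, hs, hdrs, hru, hsu⟩ := hda hdM hdnu
    have hfr : 0 ≤ f r := hM r hr
    have hfs : 0 ≤ f s := hM s hs
    have hsum : f r + f s = (n : ℤ) := by rw [← map_add, ← hdrs, hfd]
    rcases hfr.lt_or_eq with hr' | hr'
    · rcases hfs.lt_or_eq with hs' | hs'
      · exfalso
        have h1 : n ≤ (f r).toNat := Nat.sInf_le
          ⟨by omega, r, hr, ⟨s + t, M.add_mem hs htM, by rw [hct, hdrs]; abel⟩,
            (Int.toNat_of_nonneg hfr).symm⟩
        have h2 : n ≤ (f s).toNat := Nat.sInf_le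
          ⟨by omega, s, hs, ⟨r + t, M.add_mem hr htM, by rw [hct, hdrs]; abel⟩,
            (Int.toNat_of_nonneg hfs).symm⟩
        omega
      · exact step s (r + t) hs (M.add_mem hr htM) hs'.symm hsu
          (by rw [hct, hdrs]; abel)
    · exact step r (s + t) hr (M.add_mem hs htM) hr'.symm hru
        (by rw [hct, hdrs]; abel)

end Core

/-- the linear functional as an AddMonoidHom -/
def linf (a b : ℤ) : (ℤ × ℤ) →+ ℤ where
  toFun := fun x => a * x.1 + b * x.2
  map_zero' := by simp
  map_add' := by
    intro x y
    simp only [Prod.fst_add, Prod.snd_add]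
    ring

lemma linf_ker {a b : ℤ} (hab : a ≠ 0 ∨ b ≠ 0) :
    ∀ x : ℤ × ℤ, linf a b x = 0 → linf (-b) a x = 0 → x = 0 := by
  intro x h1 h2
  simp only [linf, AddMonoidHom.coe_mk, ZeroHom.coe_mk] at h1 h2
  have hpos : 0 < a ^ 2 + b ^ 2 := by
    rcases hab with h | h <;> positivity
  have e1 : (a ^ 2 + b ^ 2) * x.1 = 0 := by linear_combination a * h1 - b * h2
  have e2 : (a ^ 2 + b ^ 2) * x.2 = 0 := by linear_combination b * h1 + a * h2
  have hx1 : x.1 = 0 := by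
    rcases mul_eq_zero.mp e1 with h | h
    · omega
    · exact h
  have hx2 : x.2 = 0 := by
    rcases mul_eq_zero.mp e2 with h | h
    · omega
    · exact h
  exact Prod.ext hx1 hx2

theorem rationally_supported_furstenberg (M : AddSubmonoid (ℤ × ℤ))
    (hM : RationallySupported M) :
    ∀ b ∈ M, ¬ IsUnitIn M b → ∃ a t : ℤ × ℤ, IsAtomIn M a ∧ t ∈ M ∧ b = a + t := by
  obtain ⟨a, b, hab, hsup⟩ := hM
  intro c hc hcu
  exact core_main (g := linf (-b) a) (linf_ker hab) hsup hc hcu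

/-- the embedding of ℤ × ℕ into ℤ × ℤ -/
def emb : (ℤ × ℕ) →+ (ℤ × ℤ) where
  toFun := fun x => (x.1, (x.2 : ℤ))
  map_zero' := by simp
  map_add' := by
    intro x y
    simp [Prod.ext_iff]

lemma emb_inj : Function.Injective emb := by
  intro x y h
  simp only [emb, AddMonoidHom.coe_mk, ZeroHom.coe_mk, Prod.ext_iff] at h
  exact Prod.ext h.1 (by exact_mod_cast h.2)

lemma emb_unit_iff (M : AddSubmonoid (ℤ × ℕ)) (x : ℤ × ℕ) (hx : x ∈ M) :
    IsUnitInZN M x ↔ IsUnitIn (M.map emb) (emb x) := by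
  constructor
  · rintro ⟨-, y, hy, hxy⟩
    refine ⟨⟨x, hx, rfl⟩, ⟨y, hy, ?_⟩⟩
    rw [eq_comm, neg_eq_iff_add_eq_zero, ← map_add, hxy, map_zero]
  · rintro ⟨-, hneg⟩
    obtain ⟨z, hz, hze⟩ := hneg
    refine ⟨hx, z, hz, ?_⟩
    apply emb_inj
    rw [map_add, map_zero, hze]
    abel

theorem ZN_furstenberg (M : AddSubmonoid (ℤ × ℕ)) :
    ∀ b ∈ M, ¬ IsUnitInZN M b →
      ∃ a t : ℤ × ℕ, IsAtomInZN M a ∧ t ∈ M ∧ b = a + t := by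
  intro c hc hcu
  set M' := M.map emb with hM'
  have hsup : RationallySupported M' := by
    refine ⟨0, 1, Or.inr one_ne_zero, ?_⟩
    rintro x ⟨w, hw, rfl⟩
    simp [emb]
  have hcu' : ¬ IsUnitIn M' (emb c) := fun h =>
    hcu ((emb_unit_iff M c hc).mpr h)
  obtain ⟨a', t', ⟨ha'M, ha'u, ha'at⟩, ht'M, heq⟩ :=
    rationally_supported_furstenberg M' hsup (emb c) ⟨c, hc, rfl⟩ hcu'
  obtain ⟨α, hα, hαe⟩ := ha'M
  obtain ⟨τ, hτ, hτe⟩ := ht'M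
  have hceq : c = α + τ := by
    apply emb_inj
    rw [map_add, hαe, hτe, ← heq]
  refine ⟨α, τ, ⟨hα, ?_, ?_⟩, hτ, hceq⟩
  · intro hu
    rw [← hαe] at ha'u
    exact ha'u ((emb_unit_iff M α hα).mp hu)
  · intro r s hr hs hαrs
    have := ha'at (emb r) (emb s) ⟨r, hr, rfl⟩ ⟨s, hs, rfl⟩
      (by rw [← hαe, hαrs, map_add])
    rcases this with h | h
    · exact Or.inl ((emb_unit_iff M r hr).mpr h)
    · exact Or.inr ((emb_unit_iff M s hs).mpr h)


/-- Every submonoid of ℤ × ℕ is Furstenberg; consequently every rationally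
supported submonoid of ℤ² is Furstenberg. -/
theorem submonoids_of_ZN_and_rationally_supported_are_furstenberg :
    (∀ M : AddSubmonoid (ℤ × ℕ), ∀ b ∈ M, ¬ IsUnitInZN M b →
      ∃ a t : ℤ × ℕ, IsAtomInZN M a ∧ t ∈ M ∧ b = a + t) ∧
    (∀ M : AddSubmonoid (ℤ × ℤ), RationallySupported M →
      ∀ b ∈ M, ¬ IsUnitIn M b →
        ∃ a t : ℤ × ℤ, IsAtomIn M a ∧ t ∈ M ∧ b = a + t) := by
  exact ⟨ZN_furstenberg, rationally_supported_furstenberg⟩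
end
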